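/- Let φ(a,b) be a context of propositional dependence logic (a formula built from literals, ⊥, dependence atoms, ∧ and ⊗, in which the designated atoms a, b occur neither negated nor inside dependence atoms) without occurrences of p, q. Then in the model M_{pq} (p true exactly at w₁,w₂; q true exactly at w₂,w₃; other atoms false everywhere), the formula φ(=(p), =(q)) is equivalent to one of the six formulas: ⊤, (=(p)∧=(q)) ⊗ (=(p)∧=(q)), =(p), =(q), =(p)∧=(q), ⊥. -/
import Mathlib


/-- Formulas of propositional dependence logic D: literals, ⊥, dependence
atoms =(p₁,…,pₙ;q), conjunction and tensor. -/
inductive DForm (α : Type) : Type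
  | atom : α → DForm α
  | natom : α → DForm α                    -- negated atom ¬p
  | bot : DForm α
  | dep : List α → α → DForm α             -- dependence atom =(p₁,…,pₙ;q)
  | and : DForm α → DForm α → DForm α
  | tensor : DForm α → DForm α → DForm α

/-- Team/inquisitive support semantics for dependence logic. -/
def dsupports {W α : Type} (V : W → α → Prop) : Set W → DForm α → Prop
  | s, .atom p => ∀ w ∈ s, V w p
  | s, .natom p => ∀ w ∈ s, ¬ V w p
  | s, .bot => s = ∅
  | s, .dep ps q => ∀ w ∈ s, ∀ w' ∈ s,
      (∀ r ∈ ps, (V w r ↔ V w' r)) → (V w q ↔ V w' q)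
  | s, .and ψ χ => dsupports V s ψ ∧ dsupports V s χ
  | s, .tensor ψ χ => ∃ t₁ t₂, dsupports V t₁ ψ ∧ dsupports V t₂ χ ∧ s = t₁ ∪ t₂

/-- The proposition of a D formula: the set of supporting states. -/
def dprop {W α : Type} (V : W → α → Prop) (φ : DForm α) : Set (Set W) :=
  {s | dsupports V s φ}

/-- The constancy atom =(p): dependence atom with empty antecedent list. -/
def con {α : Type} (p : α) : DForm α := DForm.dep [] p

/-- Tensor of sets of states. -/
def tset {W : Type} (S T : Set (Set W)) : Set (Set W) :=
  {u | ∃ s ∈ S, ∃ t ∈ T, u = s ∪ t}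

/-- The model M_pq (worlds w1 = 0, w2 = 1, w3 = 2): p is true exactly at
w1, w2; q is true exactly at w2, w3; every other atom is false everywhere. -/
def VDpq {α : Type} (p q : α) : Fin 3 → α → Prop :=
  fun w r => (r = p ∧ (w = 0 ∨ w = 1)) ∨ (r = q ∧ (w = 1 ∨ w = 2))

/-- Atoms occurring in a D formula (including inside dependence atoms). -/
def DForm.datoms {α : Type} : DForm α → Set α
  | .atom r => {r}
  | .natom r => {r}
  | .bot => ∅
  | .dep ps q => {r | r ∈ ps} ∪ {q}
  | .and ψ χ => ψ.datoms ∪ χ.datoms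
  | .tensor ψ χ => ψ.datoms ∪ χ.datoms

/-- φ is a context with designated atoms a, b: a and b occur neither negated
nor inside a dependence atom. -/
def DForm.isContext {α : Type} (a b : α) : DForm α → Prop
  | .atom _ => True
  | .natom r => r ≠ a ∧ r ≠ b
  | .bot => True
  | .dep ps q => a ∉ ps ∧ b ∉ ps ∧ q ≠ a ∧ q ≠ b
  | .and ψ χ => ψ.isContext a b ∧ χ.isContext a b
  | .tensor ψ χ => ψ.isContext a b ∧ χ.isContext a b

/-- Substitute the formulas ψ, χ for the (positive, non-dependence)
occurrences of the designated atoms a, b. -/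
def dsubstAB {α : Type} [DecidableEq α] (a b : α) (ψ χ : DForm α) :
    DForm α → DForm α
  | .atom r => if r = a then ψ else if r = b then χ else .atom r
  | .natom r => .natom r
  | .bot => .bot
  | .dep ps q => .dep ps q
  | .and θ η => .and (dsubstAB a b ψ χ θ) (dsubstAB a b ψ χ η)
  | .tensor θ η => .tensor (dsubstAB a b ψ χ θ) (dsubstAB a b ψ χ η)

section Aux

lemma fin3cases : ∀ w : Fin 3, w = 0 ∨ w = 1 ∨ w = 2 := by decide

/-- The six candidate propositions, as predicates on states. -/
def Pcl : Fin 6 → Set (Fin 3) → Prop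
  | 0, _ => True
  | 1, s => ¬(0 ∈ s ∧ 1 ∈ s ∧ 2 ∈ s)
  | 2, s => ¬(0 ∈ s ∧ 2 ∈ s) ∧ ¬(1 ∈ s ∧ 2 ∈ s)
  | 3, s => ¬(0 ∈ s ∧ 1 ∈ s) ∧ ¬(0 ∈ s ∧ 2 ∈ s)
  | 4, s => ¬(0 ∈ s ∧ 1 ∈ s) ∧ ¬(0 ∈ s ∧ 2 ∈ s) ∧ ¬(1 ∈ s ∧ 2 ∈ s)
  | 5, s => 0 ∉ s ∧ 1 ∉ s ∧ 2 ∉ s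

lemma Pcl_empty (k : Fin 6) : Pcl k (∅ : Set (Fin 3)) := by
  fin_cases k <;> simp [Pcl]

lemma Pcl_only (c : Fin 3) (t : Set (Fin 3)) (h : ∀ w ∈ t, w = c)
    (k : Fin 6) (hk : k ≠ 5) : Pcl k t := by
  have h01 : ¬((0:Fin 3) ∈ t ∧ (1:Fin 3) ∈ t) := by
    rintro ⟨u, v⟩; exact absurd ((h 0 u).trans (h 1 v).symm) (by decide)
  have h02 : ¬((0:Fin 3) ∈ t ∧ (2:Fin 3) ∈ t) := by
    rintro ⟨u, v⟩; exact absurd ((h 0 u).trans (h 2 v).symm) (by decide)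
  have h12 : ¬((1:Fin 3) ∈ t ∧ (2:Fin 3) ∈ t) := by
    rintro ⟨u, v⟩; exact absurd ((h 1 u).trans (h 2 v).symm) (by decide)
  fin_cases k <;> simp [Pcl] <;> tauto

/-- Meet (intersection) table for the six classes. -/
def clMeet (k₁ k₂ : Fin 6) : Fin 6 :=
  if k₁ = 0 then k₂ else if k₂ = 0 then k₁
  else if k₁ = 5 ∨ k₂ = 5 then 5
  else if k₁ = 1 then k₂ else if k₂ = 1 then k₁
  else if k₁ = k₂ then k₁ else 4

lemma clMeet_spec (k₁ k₂ : Fin 6) (s : Set (Fin 3)) :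
    (Pcl k₁ s ∧ Pcl k₂ s) ↔ Pcl (clMeet k₁ k₂) s := by
  fin_cases k₁ <;> fin_cases k₂ <;> simp [clMeet, Pcl] <;> tauto

/-- Tensor table for the six classes. -/
def clMul (k₁ k₂ : Fin 6) : Fin 6 :=
  if k₁ = 5 then k₂ else if k₂ = 5 then k₁
  else if k₁ = 4 ∧ k₂ = 4 then 1 else 0

lemma split_eq (s : Set (Fin 3)) (c : Fin 3) :
    s = {w ∈ s | w = c} ∪ {w ∈ s | w ≠ c} := by
  ext w; by_cases hw : w = c <;> simp [hw]

lemma exists_split (k₁ k₂ : Fin 6) (h1 : k₁ ≠ 5) (h2 : k₂ ≠ 5)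
    (h44 : ¬(k₁ = 4 ∧ k₂ = 4)) (s : Set (Fin 3)) :
    ∃ t₁ t₂, Pcl k₁ t₁ ∧ Pcl k₂ t₂ ∧ s = t₁ ∪ t₂ := by
  by_cases e1 : k₁ = 0
  · subst e1; exact ⟨s, ∅, trivial, Pcl_empty k₂, by simp⟩
  by_cases e2 : k₂ = 0
  · subst e2; exact ⟨∅, s, Pcl_empty k₁, trivial, by simp⟩
  by_cases e3 : k₂ = 3
  · subst e3
    refine ⟨{w ∈ s | w = 0}, {w ∈ s | w ≠ 0},
      Pcl_only 0 _ (fun w hw => hw.2) k₁ h1, ?_, split_eq s 0⟩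
    simp [Pcl]
  by_cases e4 : k₁ = 3
  · subst e4
    refine ⟨{w ∈ s | w ≠ 0}, {w ∈ s | w = 0}, ?_,
      Pcl_only 0 _ (fun w hw => hw.2) k₂ h2, ?_⟩
    · fin_cases k₂ <;> simp_all [Pcl]
    · rw [Set.union_comm]; exact split_eq s 0
  by_cases e5 : k₂ = 4
  · subst e5
    refine ⟨{w ∈ s | w ≠ 2}, {w ∈ s | w = 2}, ?_,
      Pcl_only 2 _ (fun w hw => hw.2) 4 (by decide), ?_⟩
    · fin_cases k₁ <;> simp_all [Pcl]
    · rw [Set.union_comm]; exact split_eq s 2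
  · refine ⟨{w ∈ s | w = 2}, {w ∈ s | w ≠ 2},
      Pcl_only 2 _ (fun w hw => hw.2) k₁ h1, ?_, split_eq s 2⟩
    fin_cases k₂ <;> simp_all [Pcl]

lemma clMul_spec (k₁ k₂ : Fin 6) (s : Set (Fin 3)) :
    (∃ t₁ t₂, Pcl k₁ t₁ ∧ Pcl k₂ t₂ ∧ s = t₁ ∪ t₂) ↔ Pcl (clMul k₁ k₂) s := by
  constructor
  · rintro ⟨t₁, t₂, h1, h2, rfl⟩
    fin_cases k₁ <;> fin_cases k₂ <;>
      simp_all (config := { decide := true }) [clMul, Pcl, Set.mem_union] <;> tauto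
  · intro h
    by_cases e1 : k₁ = 5
    · subst e1
      simp only [clMul, if_pos rfl] at h
      exact ⟨∅, s, Pcl_empty 5, h, by simp⟩
    by_cases e2 : k₂ = 5
    · subst e2
      simp only [clMul, if_neg e1, if_pos rfl] at h
      exact ⟨s, ∅, h, Pcl_empty 5, by simp⟩
    by_cases e44 : k₁ = 4 ∧ k₂ = 4
    · obtain ⟨rfl, rfl⟩ := e44
      rw [show clMul 4 4 = (1:Fin 6) from by decide] at h
      simp only [Pcl] at h
      rcases (by tauto : (0:Fin 3) ∉ s ∨ (1:Fin 3) ∉ s ∨ (2:Fin 3) ∉ s)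
        with h0 | h0 | h0
      · refine ⟨{w ∈ s | w = 1}, {w ∈ s | w = 2},
          Pcl_only 1 _ (fun w hw => hw.2) 4 (by decide),
          Pcl_only 2 _ (fun w hw => hw.2) 4 (by decide), ?_⟩
        ext w; rcases fin3cases w with rfl | rfl | rfl <;> simp_all
      · refine ⟨{w ∈ s | w = 0}, {w ∈ s | w = 2},
          Pcl_only 0 _ (fun w hw => hw.2) 4 (by decide),
          Pcl_only 2 _ (fun w hw => hw.2) 4 (by decide), ?_⟩
        ext w; rcases fin3cases w with rfl | rfl | rfl <;> simp_all
      · refine ⟨{w ∈ s | w = 0}, {w ∈ s | w = 1},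
          Pcl_only 0 _ (fun w hw => hw.2) 4 (by decide),
          Pcl_only 1 _ (fun w hw => hw.2) 4 (by decide), ?_⟩
        ext w; rcases fin3cases w with rfl | rfl | rfl <;> simp_all
    · exact exists_split k₁ k₂ e1 e2 e44 s

section Model
variable {α : Type} [DecidableEq α] {p q : α}

lemma vd_p (hpq : p ≠ q) (w : Fin 3) : VDpq p q w p ↔ (w = 0 ∨ w = 1) := by
  simp [VDpq, hpq]

lemma vd_q (hpq : p ≠ q) (w : Fin 3) : VDpq p q w q ↔ (w = 1 ∨ w = 2) := by
  simp [VDpq, hpq.symm]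

lemma vd_no {r : α} (h1 : r ≠ p) (h2 : r ≠ q) (w : Fin 3) :
    ¬ VDpq p q w r := by
  simp [VDpq, h1, h2]

lemma con_p_char (hpq : p ≠ q) (s : Set (Fin 3)) :
    dsupports (VDpq p q) s (con p) ↔ Pcl 2 s := by
  show (∀ w ∈ s, ∀ w' ∈ s, _ → _) ↔ _
  constructor
  · intro h
    constructor
    · rintro ⟨h0, h2⟩
      have := h 0 h0 2 h2 (by simp)
      rw [vd_p hpq, vd_p hpq] at this
      revert this; decide
    · rintro ⟨h1', h2⟩
      have := h 1 h1' 2 h2 (by simp)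
      rw [vd_p hpq, vd_p hpq] at this
      revert this; decide
  · rintro ⟨hA, hB⟩ w hw w' hw' _
    rw [vd_p hpq, vd_p hpq]
    rcases fin3cases w with rfl | rfl | rfl <;>
      rcases fin3cases w' with rfl | rfl | rfl <;> simp <;> tauto

lemma con_q_char (hpq : p ≠ q) (s : Set (Fin 3)) :
    dsupports (VDpq p q) s (con q) ↔ Pcl 3 s := by
  show (∀ w ∈ s, ∀ w' ∈ s, _ → _) ↔ _
  constructor
  · intro h
    constructor
    · rintro ⟨h0, h1'⟩
      have := h 0 h0 1 h1' (by simp)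
      rw [vd_q hpq, vd_q hpq] at this
      revert this; decide
    · rintro ⟨h0, h2⟩
      have := h 0 h0 2 h2 (by simp)
      rw [vd_q hpq, vd_q hpq] at this
      revert this; decide
  · rintro ⟨hA, hB⟩ w hw w' hw' _
    rw [vd_q hpq, vd_q hpq]
    rcases fin3cases w with rfl | rfl | rfl <;>
      rcases fin3cases w' with rfl | rfl | rfl <;> simp <;> tauto

lemma bot_char (s : Set (Fin 3)) :
    dsupports (VDpq p q) s DForm.bot ↔ Pcl 5 s := by
  show s = ∅ ↔ _
  constructor
  · rintro rfl; exact Pcl_empty 5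
  · rintro ⟨h0, h1, h2⟩
    ext w
    rcases fin3cases w with rfl | rfl | rfl <;> simp_all

/-- Main classification lemma, by induction on the context. -/
lemma main_class (hpq : p ≠ q) (a b : α) :
    ∀ φ : DForm α, φ.isContext a b → p ∉ φ.datoms → q ∉ φ.datoms →
      ∃ k : Fin 6, ∀ s : Set (Fin 3),
        dsupports (VDpq p q) s (dsubstAB a b (con p) (con q) φ) ↔ Pcl k s := by
  intro φ
  induction φ with
  | atom r =>
    intro _ hp hq
    have hrp : r ≠ p := fun h => hp (by simp [DForm.datoms, h])
    have hrq : r ≠ q := fun h => hq (by simp [DForm.datoms, h])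
    by_cases hra : r = a
    · refine ⟨2, fun s => ?_⟩
      simp only [dsubstAB, if_pos hra]
      exact con_p_char hpq s
    by_cases hrb : r = b
    · refine ⟨3, fun s => ?_⟩
      simp only [dsubstAB, if_neg hra, if_pos hrb]
      exact con_q_char hpq s
    · refine ⟨5, fun s => ?_⟩
      simp only [dsubstAB, if_neg hra, if_neg hrb]
      show (∀ w ∈ s, VDpq p q w r) ↔ _
      constructor
      · intro h
        exact ⟨fun h0 => vd_no hrp hrq 0 (h 0 h0),
               fun h1 => vd_no hrp hrq 1 (h 1 h1),
               fun h2 => vd_no hrp hrq 2 (h 2 h2)⟩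
      · rintro ⟨h0, h1, h2⟩ w hw
        rcases fin3cases w with rfl | rfl | rfl <;> tauto
  | natom r =>
    intro _ hp hq
    have hrp : r ≠ p := fun h => hp (by simp [DForm.datoms, h])
    have hrq : r ≠ q := fun h => hq (by simp [DForm.datoms, h])
    refine ⟨0, fun s => ?_⟩
    simp only [dsubstAB]
    show (∀ w ∈ s, ¬ VDpq p q w r) ↔ _
    exact ⟨fun _ => trivial, fun _ w _ => vd_no hrp hrq w⟩
  | bot =>
    intro _ _ _
    exact ⟨5, fun s => bot_char s⟩
  | dep ps r =>
    intro _ hp hq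
    have hrp : r ≠ p := fun h => hp (by simp [DForm.datoms, h])
    have hrq : r ≠ q := fun h => hq (by simp [DForm.datoms, h])
    refine ⟨0, fun s => ?_⟩
    simp only [dsubstAB]
    show (∀ w ∈ s, ∀ w' ∈ s, _ → _) ↔ _
    refine ⟨fun _ => trivial, fun _ w _ w' _ _ => ?_⟩
    exact iff_of_false (vd_no hrp hrq w) (vd_no hrp hrq w')
  | and θ η ih₁ ih₂ =>
    rintro ⟨c1, c2⟩ hp hq
    have hp1 : p ∉ θ.datoms := fun h => hp (Or.inl h)
    have hp2 : p ∉ η.datoms := fun h => hp (Or.inr h)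
    have hq1 : q ∉ θ.datoms := fun h => hq (Or.inl h)
    have hq2 : q ∉ η.datoms := fun h => hq (Or.inr h)
    obtain ⟨k₁, h₁⟩ := ih₁ c1 hp1 hq1
    obtain ⟨k₂, h₂⟩ := ih₂ c2 hp2 hq2
    refine ⟨clMeet k₁ k₂, fun s => ?_⟩
    show (dsupports _ s _ ∧ dsupports _ s _) ↔ _
    rw [h₁ s, h₂ s]
    exact clMeet_spec k₁ k₂ s
  | tensor θ η ih₁ ih₂ =>
    rintro ⟨c1, c2⟩ hp hq
    have hp1 : p ∉ θ.datoms := fun h => hp (Or.inl h)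
    have hp2 : p ∉ η.datoms := fun h => hp (Or.inr h)
    have hq1 : q ∉ θ.datoms := fun h => hq (Or.inl h)
    have hq2 : q ∉ η.datoms := fun h => hq (Or.inr h)
    obtain ⟨k₁, h₁⟩ := ih₁ c1 hp1 hq1
    obtain ⟨k₂, h₂⟩ := ih₂ c2 hp2 hq2
    refine ⟨clMul k₁ k₂, fun s => ?_⟩
    show (∃ t₁ t₂, dsupports _ t₁ _ ∧ dsupports _ t₂ _ ∧ s = t₁ ∪ t₂) ↔ _
    rw [← clMul_spec k₁ k₂ s]
    constructor <;> rintro ⟨t₁, t₂, u1, u2, u3⟩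
    · exact ⟨t₁, t₂, (h₁ t₁).mp u1, (h₂ t₂).mp u2, u3⟩
    · exact ⟨t₁, t₂, (h₁ t₁).mpr u1, (h₂ t₂).mpr u2, u3⟩

lemma tensor_char (hpq : p ≠ q) (s : Set (Fin 3)) :
    dsupports (VDpq p q) s
      (DForm.tensor (DForm.and (con p) (con q))
        (DForm.and (con p) (con q))) ↔ Pcl 1 s := by
  have hand : ∀ t : Set (Fin 3),
      dsupports (VDpq p q) t (DForm.and (con p) (con q)) ↔ Pcl 4 t := by
    intro t
    show (dsupports _ t _ ∧ dsupports _ t _) ↔ _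
    rw [con_p_char hpq, con_q_char hpq]
    simp only [Pcl]; tauto
  show (∃ t₁ t₂, _ ∧ _ ∧ s = t₁ ∪ t₂) ↔ _
  have := clMul_spec 4 4 s
  rw [show clMul 4 4 = (1:Fin 6) from by decide] at this
  rw [← this]
  constructor <;> rintro ⟨t₁, t₂, u1, u2, u3⟩
  · exact ⟨t₁, t₂, (hand t₁).mp u1, (hand t₂).mp u2, u3⟩
  · exact ⟨t₁, t₂, (hand t₁).mpr u1, (hand t₂).mpr u2, u3⟩

end Model
end Aux

/-- for a context φ(a,b) of D without occurrences of p, q, the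
formula φ(=(p),=(q)) is equivalent in M_pq to one of: ⊤ (supported by every
state), (=(p)∧=(q))⊗(=(p)∧=(q)), =(p), =(q), =(p)∧=(q), ⊥. -/
theorem context_classification {α : Type} [DecidableEq α] (p q a b : α)
    (hpq : p ≠ q) (φ : DForm α) (hctx : φ.isContext a b)
    (hp : p ∉ φ.datoms) (hq : q ∉ φ.datoms) :
    (∀ s : Set (Fin 3),
        dsupports (VDpq p q) s (dsubstAB a b (con p) (con q) φ)) ∨
    (∀ s : Set (Fin 3),
        dsupports (VDpq p q) s (dsubstAB a b (con p) (con q) φ) ↔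
          dsupports (VDpq p q) s
            (DForm.tensor (DForm.and (con p) (con q))
              (DForm.and (con p) (con q)))) ∨
    (∀ s : Set (Fin 3),
        dsupports (VDpq p q) s (dsubstAB a b (con p) (con q) φ) ↔
          dsupports (VDpq p q) s (con p)) ∨
    (∀ s : Set (Fin 3),
        dsupports (VDpq p q) s (dsubstAB a b (con p) (con q) φ) ↔
          dsupports (VDpq p q) s (con q)) ∨
    (∀ s : Set (Fin 3),
        dsupports (VDpq p q) s (dsubstAB a b (con p) (con q) φ) ↔
          dsupports (VDpq p q) s (DForm.and (con p) (con q))) ∨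
    (∀ s : Set (Fin 3),
        dsupports (VDpq p q) s (dsubstAB a b (con p) (con q) φ) ↔
          dsupports (VDpq p q) s DForm.bot) := by
  obtain ⟨k, hk⟩ := main_class hpq a b φ hctx hp hq
  fin_cases k
  · exact Or.inl (fun s => (hk s).mpr trivial)
  · exact Or.inr (Or.inl (fun s => (hk s).trans (tensor_char hpq s).symm))
  · exact Or.inr (Or.inr (Or.inl
      (fun s => (hk s).trans (con_p_char hpq s).symm)))
  · exact Or.inr (Or.inr (Or.inr (Or.inl
      (fun s => (hk s).trans (con_q_char hpq s).symm))))
  · refine Or.inr (Or.inr (Or.inr (Or.inr (Or.inl (fun s => ?_)))))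
    refine (hk s).trans ?_
    show _ ↔ (dsupports _ s _ ∧ dsupports _ s _)
    rw [con_p_char hpq, con_q_char hpq]
    simp only [Pcl]; tauto
  · exact Or.inr (Or.inr (Or.inr (Or.inr (Or.inr
      (fun s => (hk s).trans (bot_char s).symm)))))
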